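/- Let f: R^d → R be μ-strongly convex with L₁-Lipschitz gradient and L₂-Lipschitz Hessian, minimized at x_*, and consider the monotonic randomized BFGS iterates (x_k, B_k) with x₊ = x_k − B_k∇f(x_k), x_{k+1} = argmin{f(x₊), f(x_k)}, B_{k+1} = BFGS(B_k, ∇²f(x_k), S_k), S_k ~ D i.i.d. Suppose the Lyapunov function Ψ_k = √(f(x_k) − f(x_*)) + β‖B_k − H_*⁻¹‖²_{F(H_*)} (with β = 4√2·L₁^{5/2}/(μL₂ρ)) satisfies E[Ψ_{k+1}] ≤ (1 − ρ/2)E[Ψ_k] for some ρ ∈ (0,1]. Then the ratio √((f(x_{k+1}) − f(x_*))/(f(x_k) − f(x_*))) converges to 0 with probability 1. -/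

import Mathlib

open Matrix MeasureTheory Filter
open scoped Classical

noncomputable section

/-- Vectors in `ℝ^d` with the Euclidean (2-)norm. -/
abbrev Vec (d : ℕ) := EuclideanSpace ℝ (Fin d)

/-- Matrix square root of a positive semidefinite matrix (junk value `0` otherwise). -/
noncomputable def msqrt {d : ℕ} (M : Matrix (Fin d) (Fin d) ℝ) : Matrix (Fin d) (Fin d) ℝ :=
  if h : M.PosSemidef then
    (h.1.eigenvectorUnitary : Matrix (Fin d) (Fin d) ℝ) *
      diagonal ((↑) ∘ (√·) ∘ h.1.eigenvalues) *
      (star h.1.eigenvectorUnitary : Matrix (Fin d) (Fin d) ℝ)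
  else 0

/-- Frobenius norm of a square matrix. -/
noncomputable def frobNorm {d : ℕ} (M : Matrix (Fin d) (Fin d) ℝ) : ℝ :=
  Real.sqrt (Matrix.trace (Mᵀ * M))

/-- Weighted Frobenius norm `‖W‖_{F(H)} = ‖H^{1/2} W H^{1/2}‖_F`. -/
noncomputable def wFrob {d : ℕ} (H W : Matrix (Fin d) (Fin d) ℝ) : ℝ :=
  frobNorm (msqrt H * W * msqrt H)

/-- Local norm `‖v‖_H = √⟨H v, v⟩`. -/
noncomputable def localNorm {d : ℕ} (H : Matrix (Fin d) (Fin d) ℝ) (v : Vec d) : ℝ :=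
  Real.sqrt (inner ℝ (Matrix.toEuclideanLin H v) v : ℝ)

/-- `f` is self-concordant, expressed through its Hessian map `Hf`:
the Hessian is everywhere positive definite and the local norms at nearby points are
comparable. -/
def SelfConcordant {d : ℕ} (Hf : Vec d → Matrix (Fin d) (Fin d) ℝ) : Prop :=
  (∀ x, (Hf x).PosDef) ∧
  ∀ x y v : Vec d, localNorm (Hf x) (y - x) < 1 → v ≠ 0 →
    1 - localNorm (Hf x) (y - x) ≤ localNorm (Hf y) v / localNorm (Hf x) v ∧
      localNorm (Hf y) v / localNorm (Hf x) v ≤ 1 / (1 - localNorm (Hf x) (y - x))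

/-- `g` is the gradient of `f` and `Hf` is its Hessian (the derivative of the gradient). -/
def IsGradHess {d : ℕ} (f : Vec d → ℝ) (g : Vec d → Vec d)
    (Hf : Vec d → Matrix (Fin d) (Fin d) ℝ) : Prop :=
  (∀ x, HasGradientAt f (g x) x) ∧
  ∀ x, HasFDerivAt g (Matrix.toEuclideanCLM (𝕜 := ℝ) (Hf x) : Vec d →L[ℝ] Vec d) x

/-- Smallest eigenvalue of a symmetric matrix, via the Rayleigh quotient. -/
noncomputable def lambdaMin {d : ℕ} (M : Matrix (Fin d) (Fin d) ℝ) : ℝ :=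
  ⨅ v : {v : Vec d // ‖v‖ = 1}, (inner ℝ (Matrix.toEuclideanLin M v.1) v.1 : ℝ)

/-- Entrywise expectation of a random matrix. -/
noncomputable def expMat {Ω : Type*} [MeasurableSpace Ω] (μ : Measure Ω)
    {m n : ℕ} (M : Ω → Matrix (Fin m) (Fin n) ℝ) : Matrix (Fin m) (Fin n) ℝ :=
  Matrix.of fun i j => ∫ ω, M ω i j ∂μ

/-- The projection matrix `Z = H^{1/2} S (Sᵀ H S)⁻¹ Sᵀ H^{1/2}`. -/
noncomputable def sketchProj {d τ : ℕ} (H : Matrix (Fin d) (Fin d) ℝ)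
    (S : Matrix (Fin d) (Fin τ) ℝ) : Matrix (Fin d) (Fin d) ℝ :=
  msqrt H * S * (Sᵀ * H * S)⁻¹ * Sᵀ * msqrt H

/-- The (randomized) BFGS update
`BFGS(B, H, S) = G + (I - G H) B (I - H G)` with `G = S (Sᵀ H S)⁻¹ Sᵀ`. -/
noncomputable def bfgsUpdate {d τ : ℕ} (B H : Matrix (Fin d) (Fin d) ℝ)
    (S : Matrix (Fin d) (Fin τ) ℝ) : Matrix (Fin d) (Fin d) ℝ :=
  S * (Sᵀ * H * S)⁻¹ * Sᵀ +
    (1 - S * (Sᵀ * H * S)⁻¹ * Sᵀ * H) * B * (1 - H * (S * (Sᵀ * H * S)⁻¹ * Sᵀ))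

/-- Spectral (operator 2-)norm of a matrix. -/
noncomputable def opNorm2 {d : ℕ} (M : Matrix (Fin d) (Fin d) ℝ) : ℝ :=
  ‖(Matrix.toEuclideanCLM (𝕜 := ℝ) M : Vec d →L[ℝ] Vec d)‖

instance matrixMeasurableSpace {m n : Type*} : MeasurableSpace (Matrix m n ℝ) :=
  MeasurableSpace.pi

/-- The sketching matrices `S k` are i.i.d. samples from a common distribution `D`. -/
def IIDSketch {d τ : ℕ} {Ω : Type*} [MeasurableSpace Ω] (μ : Measure Ω)
    (S : ℕ → Ω → Matrix (Fin d) (Fin τ) ℝ) : Prop :=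
  (∀ k, Measurable (S k)) ∧
  ProbabilityTheory.iIndepFun (m := fun _ => matrixMeasurableSpace) S μ ∧
  ∀ k, Measure.map (S k) μ = Measure.map (S 0) μ

end

/-!
Iterating the contraction gives `𝔼 Ψ_k ≤ (1 - ρ/2)^k Ψ_0`, so `∑ 𝔼 Ψ_k < ∞` and `Ψ_k → 0`
almost surely. This needs every `Ψ_k` to be integrable: `f(x_k) ≤ f(x_0)` by monotonicity, and
`‖B_k‖` stays bounded because the BFGS gain `G = S (Sᵀ H S)⁻¹ Sᵀ` has `‖G‖ ≤ 1/μ`.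
Along such a path `f(x_k) → f(x⋆)` and `‖B_k - H⋆⁻¹‖_{F(H⋆)} → 0`, hence `B_k → H⋆⁻¹`.
The trial point satisfies
`‖x₊ - x⋆‖ ≤ (L₁ ‖B_k - H⋆⁻¹‖ + L₂ ‖B_k‖ ‖x_k - x⋆‖) ‖x_k - x⋆‖`, and strong convexity turns
this into `f(x_{k+1}) - f(x⋆) ≤ c_k (f(x_k) - f(x⋆))` with `c_k → 0`.
-/

open scoped Matrix.Norms.L2Operator RealInnerProductSpace Topology

theorem lipschitzWith_of_norm_sub_le {E F : Type*} [SeminormedAddCommGroup E]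
    [SeminormedAddCommGroup F] {φ : E → F} {L : ℝ} (h : ∀ x y, ‖φ y - φ x‖ ≤ L * ‖y - x‖) :
    LipschitzWith (Real.toNNReal L) φ :=
  LipschitzWith.of_dist_le' fun x y => by simpa only [dist_eq_norm] using h y x

section InnerProductSpace

variable {E : Type*} [NormedAddCommGroup E] [InnerProductSpace ℝ E]
  {f : E → ℝ} {g : E → E} {m L : ℝ}

theorem mul_norm_sub_sq_le_inner_of_strongConvex
    (hf : ∀ x y, f x + ⟪g x, y - x⟫ + m / 2 * ‖y - x‖ ^ 2 ≤ f y) (x y : E) :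
    m * ‖y - x‖ ^ 2 ≤ ⟪g y - g x, y - x⟫ := by
  have hxy := hf x y
  have hyx := hf y x
  rw [norm_sub_rev, ← neg_sub y x, inner_neg_right] at hyx
  rw [inner_sub_left]
  linarith

theorem mul_norm_sub_sq_le_two_mul_sub_of_strongConvex
    (hf : ∀ x y, f x + ⟪g x, y - x⟫ + m / 2 * ‖y - x‖ ^ 2 ≤ f y) {xs : E} (hgs : g xs = 0)
    (x : E) : m * ‖x - xs‖ ^ 2 ≤ 2 * (f x - f xs) := by
  have := hf xs x
  rw [hgs, inner_zero_left] at this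
  linarith

theorem sub_le_mul_norm_sub_sq (hm : 0 ≤ m)
    (hf : ∀ x y, f x + ⟪g x, y - x⟫ + m / 2 * ‖y - x‖ ^ 2 ≤ f y)
    (hg : ∀ x y, ‖g y - g x‖ ≤ L * ‖y - x‖) {xs : E} (hgs : g xs = 0) (y : E) :
    f y - f xs ≤ L * ‖y - xs‖ ^ 2 := by
  have hconv := hf y xs
  rw [← neg_sub y xs, inner_neg_right, norm_neg] at hconv
  have hgy : ‖g y‖ ≤ L * ‖y - xs‖ := by simpa [hgs] using hg xs y
  have hinner : ⟪g y, y - xs⟫ ≤ L * ‖y - xs‖ ^ 2 := calc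
    _ ≤ ‖g y‖ * ‖y - xs‖ := real_inner_le_norm _ _
    _ ≤ L * ‖y - xs‖ * ‖y - xs‖ := by gcongr
    _ = L * ‖y - xs‖ ^ 2 := by ring
  nlinarith [mul_nonneg hm (sq_nonneg ‖y - xs‖)]

theorem gradient_eq_zero_of_isMin [CompleteSpace E] {xs : E} (hg : HasGradientAt f (g xs) xs)
    (hmin : ∀ x, f xs ≤ f x) : g xs = 0 := by
  simpa using IsLocalMin.hasFDerivAt_eq_zero (.of_forall hmin) hg.hasFDerivAt

/-- `t ↦ ⟪g (x + t • v), v⟫ - m ‖v‖² t` is monotone, so its derivative at `0` is nonnegative. -/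
theorem mul_norm_sq_le_inner_of_strongMono {T : E →L[ℝ] E} {x : E} (hT : HasFDerivAt g T x)
    (hg : ∀ x y, m * ‖y - x‖ ^ 2 ≤ ⟪g y - g x, y - x⟫) (v : E) :
    m * ‖v‖ ^ 2 ≤ ⟪T v, v⟫ := by
  set φ : ℝ → ℝ := fun t => ⟪g (x + t • v), v⟫ - m * ‖v‖ ^ 2 * t
  have hline : HasDerivAt (fun t : ℝ => x + t • v) v 0 := by
    simpa using ((hasDerivAt_id (0 : ℝ)).smul_const v).const_add x
  have hgv : HasDerivAt (fun t : ℝ => ⟪g (x + t • v), v⟫) ⟪T v, v⟫ 0 := by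
    simpa using (hT.comp_hasDerivAt_of_eq (0 : ℝ) hline (by simp)).inner ℝ
      (hasDerivAt_const (0 : ℝ) v)
  have hφ : HasDerivAt φ (⟪T v, v⟫ - m * ‖v‖ ^ 2 * 1) 0 :=
    hgv.sub ((hasDerivAt_id (0 : ℝ)).const_mul (m * ‖v‖ ^ 2))
  have hmono : Monotone φ := by
    intro s t hst
    rcases hst.eq_or_lt with rfl | hlt
    · rfl
    have h := hg (x + s • v) (x + t • v)
    rw [add_sub_add_left_eq_sub, ← sub_smul, norm_smul, inner_smul_right, Real.norm_eq_abs,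
      abs_of_pos (sub_pos.2 hlt), mul_pow] at h
    have : m * ‖v‖ ^ 2 * (t - s) ≤ ⟪g (x + t • v) - g (x + s • v), v⟫ := by
      nlinarith [sub_pos.2 hlt, sq_nonneg ‖v‖]
    simp only [φ, inner_sub_left] at this ⊢
    linarith
  have h0 := hmono.deriv_nonneg (x := 0)
  rw [hφ.deriv] at h0
  linarith

theorem inner_fderiv_comm [CompleteSpace E] {T : E → E →L[ℝ] E} (hf : ∀ x, HasGradientAt f (g x) x)
    (hT : ∀ x, HasFDerivAt g (T x) x) (x v w : E) : ⟪T x v, w⟫ = ⟪T x w, v⟫ := by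
  have hf' : ∀ y, HasFDerivAt f (innerSL ℝ (g y)) y := fun y => (hf y).hasFDerivAt
  exact (second_derivative_symmetric hf' ((innerSL ℝ).hasFDerivAt.comp x (hT x)) w v).symm

theorem norm_sub_fderiv_le {T : E → E →L[ℝ] E} {xs : E} (hT : ∀ x, HasFDerivAt g (T x) x)
    (hL : ∀ y, ‖T y - T xs‖ ≤ L * ‖y - xs‖) (hL0 : 0 ≤ L) (hgs : g xs = 0) (x : E) :
    ‖g x - T xs (x - xs)‖ ≤ L * ‖x - xs‖ ^ 2 := by
  have hderiv : ∀ y ∈ Metric.closedBall xs ‖x - xs‖,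
      HasFDerivWithinAt (fun y => g y - T xs y) (T y - T xs) (Metric.closedBall xs ‖x - xs‖) y :=
    fun y _ => ((hT y).sub (T xs).hasFDerivAt).hasFDerivWithinAt
  have hbound : ∀ y ∈ Metric.closedBall xs ‖x - xs‖, ‖T y - T xs‖ ≤ L * ‖x - xs‖ := fun y hy =>
    (hL y).trans (mul_le_mul_of_nonneg_left (mem_closedBall_iff_norm.1 hy) hL0)
  have := (convex_closedBall xs _).norm_image_sub_le_of_norm_hasFDerivWithin_le hderiv hbound
    (Metric.mem_closedBall_self (norm_nonneg _)) (mem_closedBall_iff_norm.2 le_rfl)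
  rw [hgs] at this
  rw [map_sub]
  convert this using 1
  · congr 1; abel
  · ring

end InnerProductSpace

theorem tendsto_sqrt_div_of_le_mul {δ c : ℕ → ℝ} (hδ : ∀ k, 0 ≤ δ k)
    (hc : Tendsto c atTop (𝓝 0)) (hstep : ∀ k, δ (k + 1) ≤ c k * δ k) :
    Tendsto (fun k => √(δ (k + 1) / δ k)) atTop (𝓝 0) := by
  have hratio : Tendsto (fun k => δ (k + 1) / δ k) atTop (𝓝 0) := by
    refine squeeze_zero (fun k => div_nonneg (hδ _) (hδ _)) (fun k => ?_) (by simpa using hc.abs)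
    exact div_le_of_le_mul₀ (hδ k) (abs_nonneg _)
      ((hstep k).trans (mul_le_mul_of_nonneg_right (le_abs_self _) (hδ k)))
  simpa using hratio.sqrt

theorem tendsto_zero_of_sqrt_add_mul_sq {a w : ℕ → ℝ} {β : ℝ} (hβ : 0 < β) (ha : ∀ k, 0 ≤ a k)
    (hw : ∀ k, 0 ≤ w k) (h : Tendsto (fun k => √(a k) + β * w k ^ 2) atTop (𝓝 0)) :
    Tendsto a atTop (𝓝 0) ∧ Tendsto w atTop (𝓝 0) := by
  have hsqrt : Tendsto (fun k => √(a k)) atTop (𝓝 0) :=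
    squeeze_zero (fun k => Real.sqrt_nonneg _)
      (fun k => le_add_of_nonneg_right (by positivity)) h
  have hsq : Tendsto (fun k => w k ^ 2) atTop (𝓝 0) := by
    refine squeeze_zero (fun k => sq_nonneg _) (fun k => ?_) (by simpa using h.div_const β)
    rw [le_div_iff₀ hβ]
    nlinarith [Real.sqrt_nonneg (a k)]
  constructor
  · simpa [Real.sq_sqrt (ha _)] using hsqrt.pow 2
  · simpa [Real.sqrt_sq (hw _)] using hsq.sqrt

theorem ae_tendsto_zero_of_integral_le_mul {Ω : Type*} [MeasurableSpace Ω] {μ : Measure Ω}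
    {Ψ : ℕ → Ω → ℝ} {q : ℝ} (hq0 : 0 ≤ q) (hq1 : q < 1) (hΨ : ∀ k ω, 0 ≤ Ψ k ω)
    (hint : ∀ k, Integrable (Ψ k) μ) (hcontr : ∀ k, ∫ ω, Ψ (k + 1) ω ∂μ ≤ q * ∫ ω, Ψ k ω ∂μ) :
    ∀ᵐ ω ∂μ, Tendsto (fun k => Ψ k ω) atTop (𝓝 0) := by
  have hgeom : ∀ k, ∫ ω, Ψ k ω ∂μ ≤ q ^ k * ∫ ω, Ψ 0 ω ∂μ := by
    intro k
    induction k with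
    | zero => simp
    | succ k ih => rw [pow_succ', mul_assoc]; exact (hcontr k).trans (by gcongr)
  have hsum : Summable fun k => ∫ ω, Ψ k ω ∂μ :=
    .of_nonneg_of_le (fun k => integral_nonneg (hΨ k)) hgeom
      ((summable_geometric_of_lt_one hq0 hq1).mul_right _)
  have hL1 : ∀ k, eLpNorm (Ψ k) 1 μ = ENNReal.ofReal (∫ ω, Ψ k ω ∂μ) := fun k => by
    rw [eLpNorm_one_eq_lintegral_enorm, ← ofReal_integral_norm_eq_lintegral_enorm (hint k)]
    simp_rw [Real.norm_of_nonneg (hΨ k _)]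
  have htsum : ∑' k, eLpNorm (Ψ k) 1 μ ≠ ⊤ := by
    simp_rw [hL1]
    rw [← ENNReal.ofReal_tsum_of_nonneg (fun k => integral_nonneg (hΨ k)) hsum]
    exact ENNReal.ofReal_ne_top
  filter_upwards [summable_norm_of_tsum_eLpNorm_ne_top le_rfl (fun k => (hint k).1) htsum]
    with ω hω
  exact tendsto_zero_iff_norm_tendsto_zero.2 hω.tendsto_atTop_zero

theorem measurable_of_succ {Ω α β : Type*} [MeasurableSpace Ω] [MeasurableSpace α]
    [MeasurableSpace β] {Z : ℕ → Ω → α} {S : ℕ → Ω → β} {F : α × β → α}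
    (hF : Measurable F) (hS : ∀ k, Measurable (S k)) (hZ0 : Measurable (Z 0))
    (hZ : ∀ k ω, Z (k + 1) ω = F (Z k ω, S k ω)) (k : ℕ) : Measurable (Z k) := by
  induction k with
  | zero => exact hZ0
  | succ k ih =>
    rw [funext (hZ k)]
    exact hF.comp (ih.prodMk (hS k))

instance matrixBorelSpace {m n : ℕ} : BorelSpace (Matrix (Fin m) (Fin n) ℝ) := Pi.borelSpace

section Matrices

variable {d τ : ℕ}

theorem norm_toEuclideanLin_le (M : Matrix (Fin d) (Fin d) ℝ) (v : Vec d) :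
    ‖toEuclideanLin M v‖ ≤ ‖M‖ * ‖v‖ :=
  (toEuclideanCLM (𝕜 := ℝ) M).le_opNorm v

theorem norm_one_matrix_le : ‖(1 : Matrix (Fin d) (Fin d) ℝ)‖ ≤ 1 := by
  rw [cstar_norm_def, map_one]
  exact ContinuousLinearMap.norm_id_le

theorem continuous_toEuclideanLin_apply :
    Continuous fun p : Matrix (Fin d) (Fin d) ℝ × Vec d => toEuclideanLin p.1 p.2 := by
  simp only [toLpLin_apply]
  fun_prop

theorem isHermitian_of_hasFDerivAt_gradient {f : Vec d → ℝ} {g : Vec d → Vec d}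
    {Hf : Vec d → Matrix (Fin d) (Fin d) ℝ} (hf : ∀ x, HasGradientAt f (g x) x)
    (hH : ∀ x, HasFDerivAt g (toEuclideanCLM (𝕜 := ℝ) (Hf x)) x) (x : Vec d) :
    (Hf x).IsHermitian :=
  isSymmetric_toEuclideanLin_iff.1 fun v w =>
    (inner_fderiv_comm hf hH x v w).trans (real_inner_comm _ _)

theorem posDef_of_mul_norm_sq_le {H : Matrix (Fin d) (Fin d) ℝ} {m : ℝ} (hH : H.IsHermitian)
    (hm : 0 < m) (hlb : ∀ v : Vec d, m * ‖v‖ ^ 2 ≤ ⟪toEuclideanLin H v, v⟫) : H.PosDef := by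
  refine posDef_iff_dotProduct_mulVec.2 ⟨hH, fun x hx => ?_⟩
  have hv : WithLp.toLp 2 x ≠ 0 := by simpa using hx
  have := hlb (WithLp.toLp 2 x)
  have hpos : 0 < m * ‖WithLp.toLp 2 x‖ ^ 2 := by positivity
  convert hpos.trans_le this using 1
  simp [EuclideanSpace.inner_eq_star_dotProduct]

theorem abs_le_frobNorm (M : Matrix (Fin d) (Fin d) ℝ) (i j : Fin d) : |M i j| ≤ frobNorm M := by
  rw [frobNorm, ← Real.sqrt_sq_eq_abs]
  refine Real.sqrt_le_sqrt ?_
  have hrow : M i j ^ 2 ≤ ∑ k, M k j * M k j := by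
    rw [sq]; exact Finset.single_le_sum (f := fun k => M k j * M k j)
      (fun k _ => mul_self_nonneg _) (Finset.mem_univ i)
  refine hrow.trans (Finset.single_le_sum (f := fun l => ∑ k, M k l * M k l)
    (fun l _ => Finset.sum_nonneg fun k _ => mul_self_nonneg _) (Finset.mem_univ j))

theorem tendsto_zero_of_frobNorm_tendsto_zero {M : ℕ → Matrix (Fin d) (Fin d) ℝ}
    (h : Tendsto (fun k => frobNorm (M k)) atTop (𝓝 0)) : Tendsto M atTop (𝓝 0) :=
  tendsto_pi_nhds.2 fun i => tendsto_pi_nhds.2 fun j =>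
    squeeze_zero_norm (fun k => abs_le_frobNorm (M k) i j) h

theorem msqrt_mul_self {H : Matrix (Fin d) (Fin d) ℝ} (h : H.PosSemidef) :
    msqrt H * msqrt H = H := by
  rw [msqrt, dif_pos h]
  conv_rhs => rw [h.1.spectral_theorem, Unitary.conjStarAlgAut_apply]
  have hU : (star h.1.eigenvectorUnitary : Matrix (Fin d) (Fin d) ℝ) *
      (h.1.eigenvectorUnitary : Matrix (Fin d) (Fin d) ℝ) = 1 := Unitary.coe_star_mul_self _
  simp only [Matrix.mul_assoc]
  rw [← Matrix.mul_assoc _ (h.1.eigenvectorUnitary : Matrix (Fin d) (Fin d) ℝ), hU,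
    Matrix.one_mul, ← Matrix.mul_assoc (diagonal _), diagonal_mul_diagonal]
  congr 3
  funext i
  simp [Real.mul_self_sqrt (h.eigenvalues_nonneg i)]

theorem isUnit_det_msqrt {H : Matrix (Fin d) (Fin d) ℝ} (h : H.PosDef) : IsUnit (msqrt H).det := by
  have hdet : (msqrt H).det * (msqrt H).det = H.det := by
    rw [← det_mul, msqrt_mul_self h.posSemidef]
  exact isUnit_iff_ne_zero.2 fun h0 => h.det_pos.ne' (by rw [← hdet, h0, zero_mul])

theorem tendsto_zero_of_wFrob_tendsto_zero {H : Matrix (Fin d) (Fin d) ℝ} (hH : H.PosDef)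
    {W : ℕ → Matrix (Fin d) (Fin d) ℝ} (h : Tendsto (fun k => wFrob H (W k)) atTop (𝓝 0)) :
    Tendsto W atTop (𝓝 0) := by
  set R := msqrt H
  have hW : ∀ k, W k = R⁻¹ * (R * W k * R) * R⁻¹ := fun k => by
    simp only [← mul_assoc, nonsing_inv_mul R (isUnit_det_msqrt hH), one_mul]
    rw [mul_assoc, mul_nonsing_inv R (isUnit_det_msqrt hH), mul_one]
  have := (tendsto_const_nhds (x := R⁻¹)).mul (tendsto_zero_of_frobNorm_tendsto_zero h)
    |>.mul (tendsto_const_nhds (x := R⁻¹))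
  rw [mul_zero, zero_mul] at this
  exact this.congr fun k => (hW k).symm

theorem continuous_wFrob (H : Matrix (Fin d) (Fin d) ℝ) : Continuous (wFrob H) := by
  unfold wFrob frobNorm
  fun_prop

theorem exists_wFrob_le (H : Matrix (Fin d) (Fin d) ℝ) (C : ℝ) :
    ∃ D, ∀ W : Matrix (Fin d) (Fin d) ℝ, ‖W‖ ≤ C → wFrob H W ≤ D := by
  obtain ⟨D, hD⟩ := (isCompact_closedBall (0 : Matrix (Fin d) (Fin d) ℝ) C)
    |>.exists_bound_of_continuousOn (continuous_wFrob H).continuousOn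
  exact ⟨D, fun W hW => (le_abs_self _).trans (hD W (mem_closedBall_zero_iff.2 hW))⟩

noncomputable def bfgsGain (H : Matrix (Fin d) (Fin d) ℝ) (S : Matrix (Fin d) (Fin τ) ℝ) :
    Matrix (Fin d) (Fin d) ℝ :=
  S * (Sᵀ * H * S)⁻¹ * Sᵀ

theorem bfgsUpdate_eq (B H : Matrix (Fin d) (Fin d) ℝ) (S : Matrix (Fin d) (Fin τ) ℝ) :
    bfgsUpdate B H S = bfgsGain H S + (1 - bfgsGain H S * H) * B * (1 - H * bfgsGain H S) :=
  rfl

/-- Also when `Sᵀ H S` is singular, since then `(Sᵀ H S)⁻¹ = 0`. -/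
theorem bfgsGain_mul_mul_self (H : Matrix (Fin d) (Fin d) ℝ) (S : Matrix (Fin d) (Fin τ) ℝ) :
    bfgsGain H S * H * bfgsGain H S = bfgsGain H S := by
  set A := Sᵀ * H * S
  have hA : A⁻¹ * A * A⁻¹ = A⁻¹ := by
    by_cases hu : IsUnit A.det
    · rw [nonsing_inv_mul _ hu, one_mul]
    · simp [nonsing_inv_apply_not_isUnit _ hu]
  calc bfgsGain H S * H * bfgsGain H S = S * (A⁻¹ * A * A⁻¹) * Sᵀ := by
        simp only [bfgsGain, A, Matrix.mul_assoc]
    _ = bfgsGain H S := by rw [hA]; rfl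

theorem bfgsGain_isHermitian {H : Matrix (Fin d) (Fin d) ℝ} (hH : H.IsHermitian)
    (S : Matrix (Fin d) (Fin τ) ℝ) : (bfgsGain H S).IsHermitian := by
  have hA : (Sᵀ * H * S).IsHermitian := by
    simpa [conjTranspose_eq_transpose_of_trivial] using isHermitian_conjTranspose_mul_mul S hH
  simpa [bfgsGain, conjTranspose_eq_transpose_of_trivial] using
    isHermitian_mul_mul_conjTranspose S hA.inv

/-- From `G H G = G`: `m ‖G v‖² ≤ ⟪H (G v), G v⟫ = ⟪G v, v⟫ ≤ ‖G v‖ ‖v‖`. -/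
theorem norm_bfgsGain_le {H : Matrix (Fin d) (Fin d) ℝ} {m : ℝ} (hH : H.IsHermitian) (hm : 0 < m)
    (hlb : ∀ v : Vec d, m * ‖v‖ ^ 2 ≤ ⟪toEuclideanLin H v, v⟫) (S : Matrix (Fin d) (Fin τ) ℝ) :
    ‖bfgsGain H S‖ ≤ m⁻¹ := by
  refine ContinuousLinearMap.opNorm_le_bound _ (inv_nonneg.2 hm.le) fun v => ?_
  set G := bfgsGain H S
  set w := toEuclideanLin G v
  have hsymm := isSymmetric_toEuclideanLin_iff.2 (bfgsGain_isHermitian hH S)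
  have hw : m * ‖w‖ ^ 2 ≤ ‖w‖ * ‖v‖ := calc
    m * ‖w‖ ^ 2 ≤ ⟪toEuclideanLin H w, w⟫ := hlb w
    _ = ⟪toEuclideanLin (G * H * G) v, v⟫ := by
      change _ = ⟪toEuclideanCLM (𝕜 := ℝ) (G * H * G) v, v⟫
      rw [map_mul, map_mul]
      exact (hsymm _ _).symm
    _ = ⟪w, v⟫ := by rw [bfgsGain_mul_mul_self]
    _ ≤ ‖w‖ * ‖v‖ := real_inner_le_norm _ _
  change ‖w‖ ≤ m⁻¹ * ‖v‖
  rw [← div_eq_inv_mul, le_div_iff₀ hm]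
  rcases (norm_nonneg w).eq_or_lt with h0 | hpos
  · rw [← h0, zero_mul]; exact norm_nonneg v
  · nlinarith

theorem norm_bfgsUpdate_le {B H : Matrix (Fin d) (Fin d) ℝ} {m L : ℝ} (hH : H.IsHermitian)
    (hm : 0 < m) (hlb : ∀ v : Vec d, m * ‖v‖ ^ 2 ≤ ⟪toEuclideanLin H v, v⟫) (hHL : ‖H‖ ≤ L)
    (S : Matrix (Fin d) (Fin τ) ℝ) :
    ‖bfgsUpdate B H S‖ ≤ m⁻¹ + (1 + m⁻¹ * L) ^ 2 * ‖B‖ := by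
  have hG := norm_bfgsGain_le hH hm hlb S
  have hL : 0 ≤ L := (norm_nonneg H).trans hHL
  have hGH : ‖bfgsGain H S * H‖ ≤ m⁻¹ * L :=
    (norm_mul_le _ _).trans (mul_le_mul hG hHL (norm_nonneg _) (by positivity))
  have hHG : ‖H * bfgsGain H S‖ ≤ m⁻¹ * L :=
    (norm_mul_le _ _).trans (by rw [mul_comm]; gcongr)
  have h1 : ‖1 - bfgsGain H S * H‖ ≤ 1 + m⁻¹ * L :=
    (norm_sub_le _ _).trans (add_le_add norm_one_matrix_le hGH)
  have h2 : ‖1 - H * bfgsGain H S‖ ≤ 1 + m⁻¹ * L :=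
    (norm_sub_le _ _).trans (add_le_add norm_one_matrix_le hHG)
  rw [bfgsUpdate_eq]
  refine (norm_add_le _ _).trans (add_le_add hG ?_)
  calc ‖(1 - bfgsGain H S * H) * B * (1 - H * bfgsGain H S)‖
      ≤ ‖1 - bfgsGain H S * H‖ * ‖B‖ * ‖1 - H * bfgsGain H S‖ := norm_mul₃_le
    _ ≤ (1 + m⁻¹ * L) * ‖B‖ * (1 + m⁻¹ * L) := by gcongr
    _ = (1 + m⁻¹ * L) ^ 2 * ‖B‖ := by ring

theorem measurable_matrix_inv : Measurable fun A : Matrix (Fin d) (Fin d) ℝ => A⁻¹ := by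
  simp_rw [inv_def, Ring.inverse_eq_inv']
  exact continuous_id.matrix_det.measurable.inv.smul continuous_id.matrix_adjugate.measurable

theorem measurable_bfgsGain :
    Measurable fun p : Matrix (Fin d) (Fin d) ℝ × Matrix (Fin d) (Fin τ) ℝ => bfgsGain p.1 p.2 := by
  have hA : Measurable fun p : Matrix (Fin d) (Fin d) ℝ × Matrix (Fin d) (Fin τ) ℝ =>
      (p.2ᵀ * p.1 * p.2)⁻¹ :=
    measurable_matrix_inv.comp (by fun_prop : Continuous fun p : Matrix (Fin d) (Fin d) ℝ ×
      Matrix (Fin d) (Fin τ) ℝ => p.2ᵀ * p.1 * p.2).measurable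
  exact (by fun_prop : Continuous fun q : Matrix (Fin d) (Fin τ) ℝ × Matrix (Fin τ) (Fin τ) ℝ =>
    q.1 * q.2 * q.1ᵀ).measurable.comp (measurable_snd.prodMk hA)

theorem measurable_bfgsUpdate : Measurable fun p : Matrix (Fin d) (Fin d) ℝ ×
    Matrix (Fin d) (Fin d) ℝ × Matrix (Fin d) (Fin τ) ℝ => bfgsUpdate p.1 p.2.1 p.2.2 := by
  simp only [bfgsUpdate_eq]
  have hG : Measurable fun p : Matrix (Fin d) (Fin d) ℝ × Matrix (Fin d) (Fin d) ℝ ×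
      Matrix (Fin d) (Fin τ) ℝ => bfgsGain p.2.1 p.2.2 :=
    measurable_bfgsGain.comp measurable_snd
  fun_prop

/-- `x_{k+1} = argmin {f(x₊), f(x_k)}` with `x₊ = x_k - B_k ∇f(x_k)`. -/
noncomputable def monotoneQuasiNewtonStep (f : Vec d → ℝ) (g : Vec d → Vec d) (x : Vec d)
    (B : Matrix (Fin d) (Fin d) ℝ) : Vec d :=
  if f (x - toEuclideanLin B (g x)) ≤ f x then x - toEuclideanLin B (g x) else x

theorem apply_monotoneQuasiNewtonStep_le (f : Vec d → ℝ) (g : Vec d → Vec d) (x : Vec d)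
    (B : Matrix (Fin d) (Fin d) ℝ) :
    f (monotoneQuasiNewtonStep f g x B) ≤ f x ∧
      f (monotoneQuasiNewtonStep f g x B) ≤ f (x - toEuclideanLin B (g x)) := by
  unfold monotoneQuasiNewtonStep
  split_ifs with h
  · exact ⟨h, le_rfl⟩
  · exact ⟨le_rfl, (not_le.1 h).le⟩

theorem measurable_monotoneQuasiNewtonStep {f : Vec d → ℝ} {g : Vec d → Vec d}
    (hf : Continuous f) (hg : Continuous g) :
    Measurable fun p : Vec d × Matrix (Fin d) (Fin d) ℝ => monotoneQuasiNewtonStep f g p.1 p.2 := by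
  have htrial : Continuous fun p : Vec d × Matrix (Fin d) (Fin d) ℝ =>
      p.1 - toEuclideanLin p.2 (g p.1) :=
    continuous_fst.sub (continuous_toEuclideanLin_apply.comp
      (continuous_snd.prodMk (hg.comp continuous_fst)))
  exact .ite (measurableSet_le (hf.comp htrial).measurable (hf.comp continuous_fst).measurable)
    htrial.measurable measurable_fst

theorem measurable_monotoneBFGSStep {f : Vec d → ℝ} {g : Vec d → Vec d}
    {Hf : Vec d → Matrix (Fin d) (Fin d) ℝ} (hf : Continuous f) (hg : Continuous g)
    (hH : Measurable Hf) :
    Measurable fun q : (Vec d × Matrix (Fin d) (Fin d) ℝ) × Matrix (Fin d) (Fin τ) ℝ =>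
      (monotoneQuasiNewtonStep f g q.1.1 q.1.2, bfgsUpdate q.1.2 (Hf q.1.1) q.2) :=
  -- `(e :)` keeps the unifier from unfolding `bfgsUpdate` against the goal.
  ((measurable_monotoneQuasiNewtonStep hf hg).comp measurable_fst).prodMk
    (measurable_bfgsUpdate.comp
      (measurable_fst.snd.prodMk ((hH.comp measurable_fst.fst).prodMk measurable_snd)) :)

theorem exists_norm_bfgs_iterate_le {Ω : Type*} {Hf : Vec d → Matrix (Fin d) (Fin d) ℝ} {m L : ℝ}
    (hm : 0 < m) (hH : ∀ x, (Hf x).IsHermitian)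
    (hlb : ∀ x v, m * ‖v‖ ^ 2 ≤ ⟪toEuclideanLin (Hf x) v, v⟫) (hHL : ∀ x, ‖Hf x‖ ≤ L)
    {X : ℕ → Ω → Vec d} {S : ℕ → Ω → Matrix (Fin d) (Fin τ) ℝ}
    {B : ℕ → Ω → Matrix (Fin d) (Fin d) ℝ} {B0 : Matrix (Fin d) (Fin d) ℝ}
    (hB0 : ∀ ω, B 0 ω = B0) (hB : ∀ k ω, B (k + 1) ω = bfgsUpdate (B k ω) (Hf (X k ω)) (S k ω))
    (k : ℕ) : ∃ C, ∀ ω, ‖B k ω‖ ≤ C := by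
  induction k with
  | zero => exact ⟨‖B0‖, fun ω => by rw [hB0]⟩
  | succ k ih =>
    obtain ⟨C, hC⟩ := ih
    refine ⟨m⁻¹ + (1 + m⁻¹ * L) ^ 2 * C, fun ω => ?_⟩
    rw [hB k ω]
    exact (norm_bfgsUpdate_le (hH _) hm (hlb _) (hHL _) _).trans (by gcongr; exact hC ω)

theorem integrable_sqrt_add_mul_wFrob_sq {Ω : Type*} [MeasurableSpace Ω] {μ : Measure Ω}
    [IsFiniteMeasure μ] {φ : Ω → ℝ} {B : Ω → Matrix (Fin d) (Fin d) ℝ}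
    (H A : Matrix (Fin d) (Fin d) ℝ) {β c C : ℝ} (hβ : 0 ≤ β) (hφ : Measurable φ)
    (hB : Measurable B) (hφc : ∀ ω, φ ω ≤ c) (hBC : ∀ ω, ‖B ω‖ ≤ C) :
    Integrable (fun ω => √(φ ω) + β * wFrob H (B ω - A) ^ 2) μ := by
  obtain ⟨D, hD⟩ := exists_wFrob_le H (C + ‖A‖)
  have hmeas : Measurable fun ω => √(φ ω) + β * wFrob H (B ω - A) ^ 2 :=
    hφ.sqrt.add (measurable_const.mul
      (((continuous_wFrob H).measurable.comp (hB.sub_const A)).pow_const 2))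
  refine .of_bound hmeas.aestronglyMeasurable (√c + β * D ^ 2) (ae_of_all _ fun ω => ?_)
  have hw : wFrob H (B ω - A) ≤ D := hD _ ((norm_sub_le _ _).trans (by gcongr; exact hBC ω))
  have hw0 : 0 ≤ wFrob H (B ω - A) := Real.sqrt_nonneg _
  rw [Real.norm_of_nonneg (by positivity)]
  gcongr
  exact hφc ω

theorem integrable_lyapunov {Ω : Type*} [MeasurableSpace Ω] {μ : Measure Ω} [IsFiniteMeasure μ]
    {f : Vec d → ℝ} {g : Vec d → Vec d} {Hf : Vec d → Matrix (Fin d) (Fin d) ℝ} {m L β : ℝ}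
    (hf : Continuous f) (hg : Continuous g) (hHf : Measurable Hf) (hm : 0 < m)
    (hH : ∀ x, (Hf x).IsHermitian) (hlb : ∀ x v, m * ‖v‖ ^ 2 ≤ ⟪toEuclideanLin (Hf x) v, v⟫)
    (hHL : ∀ x, ‖Hf x‖ ≤ L) (hβ : 0 ≤ β) {S : ℕ → Ω → Matrix (Fin d) (Fin τ) ℝ}
    (hS : ∀ k, Measurable (S k)) {X : ℕ → Ω → Vec d} {B : ℕ → Ω → Matrix (Fin d) (Fin d) ℝ}
    {x0 : Vec d} {B0 : Matrix (Fin d) (Fin d) ℝ} (hX0 : ∀ ω, X 0 ω = x0) (hB0 : ∀ ω, B 0 ω = B0)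
    (hX : ∀ k ω, X (k + 1) ω = monotoneQuasiNewtonStep f g (X k ω) (B k ω))
    (hB : ∀ k ω, B (k + 1) ω = bfgsUpdate (B k ω) (Hf (X k ω)) (S k ω))
    (c : ℝ) (H A : Matrix (Fin d) (Fin d) ℝ) (k : ℕ) :
    Integrable (fun ω => √(f (X k ω) - c) + β * wFrob H (B k ω - A) ^ 2) μ := by
  have hmeas : Measurable fun ω => (X k ω, B k ω) :=
    measurable_of_succ (Z := fun k ω => (X k ω, B k ω))
      (measurable_monotoneBFGSStep (τ := τ) hf hg hHf) hS (by simp [hX0, hB0])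
      (fun k ω => by rw [hX, hB]) k
  have hfX : ∀ ω, f (X k ω) ≤ f x0 := fun ω =>
    hX0 ω ▸ antitone_nat_of_succ_le (f := fun k => f (X k ω))
      (fun k => by rw [hX]; exact (apply_monotoneQuasiNewtonStep_le _ _ _ _).1) (Nat.zero_le k)
  obtain ⟨C, hC⟩ := exists_norm_bfgs_iterate_le hm hH hlb hHL hB0 hB k
  exact integrable_sqrt_add_mul_wFrob_sq H A hβ ((hf.measurable.comp hmeas.fst).sub_const c)
    hmeas.snd (fun ω => sub_le_sub_right (hfX ω) c) hC

theorem norm_le_of_hasFDerivAt_toEuclideanCLM {g : Vec d → Vec d} {H : Matrix (Fin d) (Fin d) ℝ}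
    {x : Vec d} {L : ℝ} (hH : HasFDerivAt g (toEuclideanCLM (𝕜 := ℝ) H) x)
    (hg : ∀ x y, ‖g y - g x‖ ≤ L * ‖y - x‖) (hL : 0 ≤ L) : ‖H‖ ≤ L := by
  have := hH.le_of_lipschitz (lipschitzWith_of_norm_sub_le hg)
  rwa [Real.coe_toNNReal _ hL] at this

/-- The error of the quasi-Newton step `x₊ = x - B ∇f(x)`, for any left inverse `A` of
`H = ∇²f(x⋆)`: `x₊ - x⋆ = (A - B) H (x - x⋆) - B (∇f(x) - H (x - x⋆))`. -/
theorem norm_quasiNewton_sub_le {g : Vec d → Vec d} {H A B : Matrix (Fin d) (Fin d) ℝ}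
    {xs x : Vec d} {L1 L2 : ℝ} (hA : A * H = 1) (hH : ‖H‖ ≤ L1)
    (happrox : ‖g x - toEuclideanLin H (x - xs)‖ ≤ L2 * ‖x - xs‖ ^ 2) :
    ‖x - toEuclideanLin B (g x) - xs‖ ≤ (L1 * ‖B - A‖ + ‖B‖ * (L2 * ‖x - xs‖)) * ‖x - xs‖ := by
  set u := x - xs
  set r := g x - toEuclideanLin H u
  have hAH : toEuclideanLin A (toEuclideanLin H u) = u := by
    change toEuclideanCLM (𝕜 := ℝ) A (toEuclideanCLM (𝕜 := ℝ) H u) = u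
    rw [← mul_apply_eq_comp, ← map_mul, hA, map_one, one_apply_eq_self]
  have hsplit : x - toEuclideanLin B (g x) - xs =
      toEuclideanLin (A - B) (toEuclideanLin H u) - toEuclideanLin B r := by
    rw [map_sub, LinearMap.sub_apply, hAH, map_sub (toEuclideanLin B)]
    simp only [u]
    abel
  have hfirst : ‖toEuclideanLin (A - B) (toEuclideanLin H u)‖ ≤ ‖B - A‖ * (L1 * ‖u‖) := by
    rw [norm_sub_rev B]
    exact (norm_toEuclideanLin_le _ _).trans
      (by gcongr; exact (norm_toEuclideanLin_le _ _).trans (by gcongr))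
  have hsecond : ‖toEuclideanLin B r‖ ≤ ‖B‖ * (L2 * ‖u‖ ^ 2) :=
    (norm_toEuclideanLin_le _ _).trans (by gcongr)
  rw [hsplit]
  calc _ ≤ ‖B - A‖ * (L1 * ‖u‖) + ‖B‖ * (L2 * ‖u‖ ^ 2) :=
        (norm_sub_le _ _).trans (add_le_add hfirst hsecond)
    _ = _ := by ring

/-- The contraction factor `L₁ ‖B k - A‖ + ‖B k‖ L₂ ‖x k - x⋆‖` of `norm_quasiNewton_sub_le`
tends to zero. -/
theorem tendsto_sqrt_ratio_of_tendsto_inverse {f : Vec d → ℝ} {g : Vec d → Vec d} {xs : Vec d}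
    {H A : Matrix (Fin d) (Fin d) ℝ} {mu L1 L2 : ℝ} (hmu : 0 < mu)
    (hgrowth : ∀ x, mu * ‖x - xs‖ ^ 2 ≤ 2 * (f x - f xs))
    (hupper : ∀ y, f y - f xs ≤ L1 * ‖y - xs‖ ^ 2)
    (happrox : ∀ x, ‖g x - toEuclideanLin H (x - xs)‖ ≤ L2 * ‖x - xs‖ ^ 2)
    (hA : A * H = 1) (hH : ‖H‖ ≤ L1) {x : ℕ → Vec d} {B : ℕ → Matrix (Fin d) (Fin d) ℝ}
    (hstep : ∀ k, f (x (k + 1)) ≤ f (x k - toEuclideanLin (B k) (g (x k))))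
    (hδ : Tendsto (fun k => f (x k) - f xs) atTop (𝓝 0)) (hB : Tendsto B atTop (𝓝 A)) :
    Tendsto (fun k => √((f (x (k + 1)) - f xs) / (f (x k) - f xs))) atTop (𝓝 0) := by
  have hdist : ∀ k, ‖x k - xs‖ ^ 2 ≤ 2 / mu * (f (x k) - f xs) := fun k => by
    rw [div_mul_eq_mul_div, le_div_iff₀ hmu]
    linarith [hgrowth (x k)]
  have hx : Tendsto (fun k => ‖x k - xs‖) atTop (𝓝 0) := by
    refine squeeze_zero (fun k => norm_nonneg _)
      (fun k => Real.le_sqrt_of_sq_le (hdist k)) ?_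
    simpa using (hδ.const_mul (2 / mu)).sqrt
  set E := fun k => L1 * ‖B k - A‖ + ‖B k‖ * (L2 * ‖x k - xs‖)
  have hE : Tendsto E atTop (𝓝 0) := by
    simpa using ((hB.sub_const A).norm.const_mul L1).add (hB.norm.mul (hx.const_mul L2))
  have hL1 : 0 ≤ L1 := (norm_nonneg H).trans hH
  refine tendsto_sqrt_div_of_le_mul (δ := fun k => f (x k) - f xs)
    (c := fun k => L1 * E k ^ 2 * (2 / mu))
    (fun k => by nlinarith [hgrowth (x k), sq_nonneg ‖x k - xs‖])
    (by simpa using ((hE.pow 2).const_mul L1).mul_const (2 / mu)) fun k => ?_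
  calc f (x (k + 1)) - f xs ≤ f (x k - toEuclideanLin (B k) (g (x k))) - f xs := by
        linarith [hstep k]
    _ ≤ L1 * (E k * ‖x k - xs‖) ^ 2 := (hupper _).trans (by
        gcongr; exact norm_quasiNewton_sub_le hA hH (happrox (x k)))
    _ = L1 * E k ^ 2 * ‖x k - xs‖ ^ 2 := by ring
    _ ≤ L1 * E k ^ 2 * (2 / mu * (f (x k) - f xs)) := by gcongr; exact hdist k
    _ = _ := by ring

end Matrices

theorem function_value_ratio_tendsto_zero_general
    {d τ : ℕ} {Ω : Type*} [MeasurableSpace Ω] (μ : Measure Ω) [IsProbabilityMeasure μ]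
    (f : Vec d → ℝ) (g : Vec d → Vec d) (Hf : Vec d → Matrix (Fin d) (Fin d) ℝ)
    (hfgH : IsGradHess f g Hf)
    (mu L1 L2 : ℝ) (hmu : 0 < mu) (hL1 : 0 < L1) (hL2 : 0 < L2)
    (hstrconv : ∀ x y : Vec d, f x + (inner ℝ (g x) (y - x) : ℝ) + mu / 2 * ‖y - x‖ ^ 2 ≤ f y)
    (hlipgrad : ∀ x y : Vec d, ‖g y - g x‖ ≤ L1 * ‖y - x‖)
    (hliphess : ∀ x y : Vec d, opNorm2 (Hf y - Hf x) ≤ L2 * ‖y - x‖)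
    (xstar : Vec d) (hmin : ∀ x, f xstar ≤ f x)
    (S : ℕ → Ω → Matrix (Fin d) (Fin τ) ℝ) (hiid : IIDSketch μ S)
    (x0 : Vec d) (B0 : Matrix (Fin d) (Fin d) ℝ)
    (X : ℕ → Ω → Vec d) (Bm : ℕ → Ω → Matrix (Fin d) (Fin d) ℝ)
    (hX0 : ∀ ω, X 0 ω = x0) (hB0 : ∀ ω, Bm 0 ω = B0)
    (hXstep : ∀ k ω, X (k+1) ω =
      if f (X k ω - Matrix.toEuclideanLin (Bm k ω) (g (X k ω))) ≤ f (X k ω) then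
        X k ω - Matrix.toEuclideanLin (Bm k ω) (g (X k ω))
      else X k ω)
    (hBstep : ∀ k ω, Bm (k+1) ω = bfgsUpdate (Bm k ω) (Hf (X k ω)) (S k ω))
    (ρ : ℝ) (hρpos : 0 < ρ) (hρ1 : ρ ≤ 1)
    (Ψ : ℕ → Ω → ℝ)
    (hΨ : ∀ k ω, Ψ k ω = Real.sqrt (f (X k ω) - f xstar) +
      4 * Real.sqrt 2 * L1 ^ ((5 : ℝ) / 2) / (mu * L2 * ρ) *
        wFrob (Hf xstar) (Bm k ω - (Hf xstar)⁻¹) ^ 2)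
    (hcontr : ∀ k, ∫ ω, Ψ (k + 1) ω ∂μ ≤ (1 - ρ / 2) * ∫ ω, Ψ k ω ∂μ) :
    ∀ᵐ ω ∂μ,
      Tendsto (fun k =>
        Real.sqrt ((f (X (k + 1) ω) - f xstar) / (f (X k ω) - f xstar))) atTop (nhds 0) := by
  obtain ⟨hgrad, hhess⟩ := hfgH
  have hgs : g xstar = 0 := gradient_eq_zero_of_isMin (hgrad xstar) hmin
  have hherm := isHermitian_of_hasFDerivAt_gradient hgrad hhess
  have hlb : ∀ x v, mu * ‖v‖ ^ 2 ≤ ⟪toEuclideanLin (Hf x) v, v⟫ := fun x =>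
    mul_norm_sq_le_inner_of_strongMono (hhess x) (mul_norm_sub_sq_le_inner_of_strongConvex hstrconv)
  have hHL : ∀ x, ‖Hf x‖ ≤ L1 := fun x =>
    norm_le_of_hasFDerivAt_toEuclideanCLM (hhess x) hlipgrad hL1.le
  have hHlip : ∀ x y, ‖Hf y - Hf x‖ ≤ L2 * ‖y - x‖ := hliphess
  have hXstep' : ∀ k ω, X (k + 1) ω = monotoneQuasiNewtonStep f g (X k ω) (Bm k ω) := hXstep
  have hβ : 0 < 4 * Real.sqrt 2 * L1 ^ ((5 : ℝ) / 2) / (mu * L2 * ρ) := by positivity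
  -- `hcontr` carries information only for integrable `Ψ k` (otherwise `∫ = 0`).
  have hint : ∀ k, Integrable (Ψ k) μ := fun k => by
    rw [funext (hΨ k)]
    exact integrable_lyapunov (continuous_iff_continuousAt.2 fun x =>
        (hgrad x).differentiableAt.continuousAt) (lipschitzWith_of_norm_sub_le hlipgrad).continuous
      (lipschitzWith_of_norm_sub_le hHlip).continuous.measurable hmu hherm hlb hHL hβ.le hiid.1
      hX0 hB0 hXstep' hBstep _ _ _ k
  have hΨnn : ∀ k ω, 0 ≤ Ψ k ω := fun k ω => by rw [hΨ]; positivity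
  have hPD := posDef_of_mul_norm_sq_le (hherm xstar) hmu (hlb xstar)
  filter_upwards [ae_tendsto_zero_of_integral_le_mul (by linarith) (by linarith) hΨnn hint hcontr]
    with ω hω
  obtain ⟨hδ, hw⟩ := tendsto_zero_of_sqrt_add_mul_sq
    (w := fun k => wFrob (Hf xstar) (Bm k ω - (Hf xstar)⁻¹)) hβ (fun k => sub_nonneg.2 (hmin _))
    (fun k => Real.sqrt_nonneg _) (by simpa only [hΨ] using hω)
  refine tendsto_sqrt_ratio_of_tendsto_inverse (x := fun k => X k ω) (B := fun k => Bm k ω) hmu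
    (mul_norm_sub_sq_le_two_mul_sub_of_strongConvex hstrconv hgs)
    (sub_le_mul_norm_sub_sq hmu.le hstrconv hlipgrad hgs)
    (norm_sub_fderiv_le (T := fun x => toEuclideanCLM (𝕜 := ℝ) (Hf x)) hhess
      (fun y => by rw [← map_sub]; exact hHlip xstar y) hL2.le hgs)
    (nonsing_inv_mul _ (isUnit_iff_ne_zero.2 hPD.det_pos.ne')) (hHL xstar)
    (fun k => by rw [hXstep']; exact (apply_monotoneQuasiNewtonStep_le _ _ _ _).2) hδ ?_
  simpa using (tendsto_zero_of_wFrob_tendsto_zero hPD hw).add_const (Hf xstar)⁻¹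

/-- **Almost sure superlinear decrease of the ratio of function values (Lemma A.10).** -/
theorem function_value_ratio_tendsto_zero
    {d τ : ℕ} {Ω : Type*} [MeasurableSpace Ω] (μ : Measure Ω) [IsProbabilityMeasure μ]
    (f : Vec d → ℝ) (g : Vec d → Vec d) (Hf : Vec d → Matrix (Fin d) (Fin d) ℝ)
    (hfgH : IsGradHess f g Hf)
    (mu L1 L2 : ℝ) (hmu : 0 < mu) (hL1 : 0 < L1) (hL2 : 0 < L2)
    (hstrconv : ∀ x y : Vec d, f x + (inner ℝ (g x) (y - x) : ℝ) + mu / 2 * ‖y - x‖ ^ 2 ≤ f y)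
    (hlipgrad : ∀ x y : Vec d, ‖g y - g x‖ ≤ L1 * ‖y - x‖)
    (hliphess : ∀ x y : Vec d, opNorm2 (Hf y - Hf x) ≤ L2 * ‖y - x‖)
    (xstar : Vec d) (hmin : ∀ x, f xstar ≤ f x)
    (S : ℕ → Ω → Matrix (Fin d) (Fin τ) ℝ) (hiid : IIDSketch μ S)
    (hrank : ∀ k ω, (S k ω).rank = τ)
    (x0 : Vec d) (B0 : Matrix (Fin d) (Fin d) ℝ) (hB0symm : B0.IsSymm)
    (X : ℕ → Ω → Vec d) (Bm : ℕ → Ω → Matrix (Fin d) (Fin d) ℝ)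
    (hX0 : ∀ ω, X 0 ω = x0) (hB0 : ∀ ω, Bm 0 ω = B0)
    (hXstep : ∀ k ω, X (k+1) ω =
      if f (X k ω - Matrix.toEuclideanLin (Bm k ω) (g (X k ω))) ≤ f (X k ω) then
        X k ω - Matrix.toEuclideanLin (Bm k ω) (g (X k ω))
      else X k ω)
    (hBstep : ∀ k ω, Bm (k+1) ω = bfgsUpdate (Bm k ω) (Hf (X k ω)) (S k ω))
    (ρ : ℝ) (hρpos : 0 < ρ) (hρ1 : ρ ≤ 1)
    (Ψ : ℕ → Ω → ℝ)
    (hΨ : ∀ k ω, Ψ k ω = Real.sqrt (f (X k ω) - f xstar) +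
      4 * Real.sqrt 2 * L1 ^ ((5 : ℝ) / 2) / (mu * L2 * ρ) *
        wFrob (Hf xstar) (Bm k ω - (Hf xstar)⁻¹) ^ 2)
    (hcontr : ∀ k, ∫ ω, Ψ (k + 1) ω ∂μ ≤ (1 - ρ / 2) * ∫ ω, Ψ k ω ∂μ) :
    ∀ᵐ ω ∂μ,
      Tendsto (fun k =>
        Real.sqrt ((f (X (k + 1) ω) - f xstar) / (f (X k ω) - f xstar))) atTop (nhds 0) :=
  function_value_ratio_tendsto_zero_general μ f g Hf hfgH mu L1 L2 hmu hL1 hL2 hstrconv hlipgrad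
    hliphess xstar hmin S hiid x0 B0 X Bm hX0 hB0 hXstep hBstep ρ hρpos hρ1 Ψ hΨ hcontr
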